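/- arXiv:0903.1785 — 2 statements merged into one kernel-verified Lean document; each statement's English description precedes it below -/
import Mathlib

section
/- Let S be a semigroup and a, d ∈ S. If a is invertible along d, then ad L d and the H-class of ad is a group (under the semigroup multiplication restricted to it). -/
variable {S : Type*} [Semigroup S]

/-- `x` is below `y` in the L-preorder: `x ∈ S¹y`. -/
def lle (x y : S) : Prop := x = y ∨ ∃ s, x = s * y
/-- `x` is below `y` in the R-preorder: `x ∈ yS¹`. -/
def rle (x y : S) : Prop := x = y ∨ ∃ s, x = y * s
/-- Green's L relation: `S¹x = S¹y`. -/
def lrel (x y : S) : Prop := lle x y ∧ lle y x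
/-- Green's R relation: `xS¹ = yS¹`. -/
def rrel (x y : S) : Prop := rle x y ∧ rle y x
/-- Green's H relation. -/
def hrel (x y : S) : Prop := lrel x y ∧ rrel x y
/-- `b` is an inverse of `a` along `d`. -/
def invAlong (a d b : S) : Prop :=
  b * a * d = d ∧ d * a * b = d ∧ (∃ s, b = d * s) ∧ (∃ t, b = t * d)
/-- The H-class of `x`. -/
def hClass (x : S) : Set S := {y | hrel y x}
/-- A subset of `S` is a group under the restricted multiplication. -/
def isGroupSet (H : Set S) : Prop :=
  (∀ x ∈ H, ∀ y ∈ H, x * y ∈ H) ∧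
  ∃ e ∈ H, (∀ x ∈ H, e * x = x ∧ x * e = x) ∧ ∀ x ∈ H, ∃ y ∈ H, x * y = e ∧ y * x = e

/-!
If `b` is an inverse of `a` along `d`, then `d = b * (a * d)`, so `a * d` L `d`. Moreover
`b * a * b = b`, so `a * b` is idempotent, and `a * b` H `a * d`. By Green's theorem the H-class
of an idempotent `e` is a group: every `x` in it has a left inverse `e * u * e` and a right inverse
`e * v * e`, which coincide since `e` is a two-sided identity on the class.
-/

lemma lle_trans {x y z : S} (hxy : lle x y) (hyz : lle y z) : lle x z := by
  rcases hxy with rfl | ⟨s, rfl⟩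
  · exact hyz
  rcases hyz with rfl | ⟨t, rfl⟩
  · exact Or.inr ⟨s, rfl⟩
  · exact Or.inr ⟨s * t, (mul_assoc ..).symm⟩

lemma rle_trans {x y z : S} (hxy : rle x y) (hyz : rle y z) : rle x z := by
  rcases hxy with rfl | ⟨s, rfl⟩
  · exact hyz
  rcases hyz with rfl | ⟨t, rfl⟩
  · exact Or.inr ⟨s, rfl⟩
  · exact Or.inr ⟨t * s, mul_assoc ..⟩

lemma hrel_symm {x y : S} (h : hrel x y) : hrel y x :=
  ⟨⟨h.1.2, h.1.1⟩, ⟨h.2.2, h.2.1⟩⟩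

lemma hrel_trans {x y z : S} (hxy : hrel x y) (hyz : hrel y z) : hrel x z :=
  ⟨⟨lle_trans hxy.1.1 hyz.1.1, lle_trans hyz.1.2 hxy.1.2⟩,
   ⟨rle_trans hxy.2.1 hyz.2.1, rle_trans hyz.2.2 hxy.2.2⟩⟩

lemma hClass_eq_of_hrel {x y : S} (h : hrel x y) : hClass x = hClass y := by
  ext z
  exact ⟨fun hz => hrel_trans hz h, fun hz => hrel_trans hz (hrel_symm h)⟩

lemma eq_of_mul_eq_of_mul_eq {x e l r : S} (hl : l * x = e) (hr : x * r = e)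
    (hle : l * e = l) (her : e * r = r) : l = r := by
  rw [← hle, ← hr, ← mul_assoc, hl, her]

lemma mem_hClass_of_mul_eq {e z w : S} (hez : e * z = z) (hze : z * e = z)
    (hwz : w * z = e) (hzw : z * w = e) : z ∈ hClass e :=
  ⟨⟨Or.inr ⟨z, hze.symm⟩, Or.inr ⟨w, hwz.symm⟩⟩, ⟨Or.inr ⟨z, hez.symm⟩, Or.inr ⟨w, hzw.symm⟩⟩⟩

namespace IsIdempotentElem

variable {e x : S}

lemma mem_hClass (he : IsIdempotentElem e) : e ∈ hClass e :=
  mem_hClass_of_mul_eq he he he he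

lemma mul_eq_of_lle (he : IsIdempotentElem e) (hx : lle x e) : x * e = x := by
  rcases hx with rfl | ⟨s, rfl⟩
  · exact he
  · rw [mul_assoc, he]

lemma mul_eq_of_rle (he : IsIdempotentElem e) (hx : rle x e) : e * x = x := by
  rcases hx with rfl | ⟨s, rfl⟩
  · exact he
  · rw [← mul_assoc, he]

lemma exists_mul_eq_of_lle (he : IsIdempotentElem e) (hx : lle e x) : ∃ u, u * x = e := by
  rcases hx with rfl | ⟨u, rfl⟩
  · exact ⟨e, he⟩
  · exact ⟨u, rfl⟩

lemma exists_mul_eq_of_rle (he : IsIdempotentElem e) (hx : rle e x) : ∃ v, x * v = e := by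
  rcases hx with rfl | ⟨v, rfl⟩
  · exact ⟨e, he⟩
  · exact ⟨v, rfl⟩

lemma exists_inv_mem_hClass (he : IsIdempotentElem e) (hx : x ∈ hClass e) :
    ∃ y ∈ hClass e, x * y = e ∧ y * x = e := by
  obtain ⟨u, hu⟩ := he.exists_mul_eq_of_lle hx.1.2
  obtain ⟨v, hv⟩ := he.exists_mul_eq_of_rle hx.2.2
  have hex : e * x = x := he.mul_eq_of_rle hx.2.1
  have hxe : x * e = x := he.mul_eq_of_lle hx.1.1
  have hl : e * u * e * x = e := by rw [mul_assoc, hex, mul_assoc, hu, he]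
  have hr : x * (e * v * e) = e := by rw [← mul_assoc, ← mul_assoc, hxe, hv, he]
  have hle : e * u * e * e = e * u * e := by rw [mul_assoc, he]
  have her : e * (e * v * e) = e * v * e := by rw [← mul_assoc, ← mul_assoc, he]
  have hlr := eq_of_mul_eq_of_mul_eq hl hr hle her
  rw [← hlr] at hr her
  exact ⟨e * u * e, mem_hClass_of_mul_eq her hle hr hl, hr, hl⟩

lemma mul_mem_hClass (he : IsIdempotentElem e) {y : S} (hx : x ∈ hClass e)
    (hy : y ∈ hClass e) : x * y ∈ hClass e := by
  obtain ⟨x', -, hxx', hx'x⟩ := he.exists_inv_mem_hClass hx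
  obtain ⟨y', hy', hyy', hy'y⟩ := he.exists_inv_mem_hClass hy
  refine mem_hClass_of_mul_eq (w := y' * x') ?_ ?_ ?_ ?_
  · rw [← mul_assoc, he.mul_eq_of_rle hx.2.1]
  · rw [mul_assoc, he.mul_eq_of_lle hy.1.1]
  · calc y' * x' * (x * y) = y' * (x' * x) * y := by simp only [mul_assoc]
      _ = e := by rw [hx'x, he.mul_eq_of_lle hy'.1.1, hy'y]
  · calc x * y * (y' * x') = x * (y * y') * x' := by simp only [mul_assoc]
      _ = e := by rw [hyy', he.mul_eq_of_lle hx.1.1, hxx']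

theorem isGroupSet_hClass (he : IsIdempotentElem e) : isGroupSet (hClass e) :=
  ⟨fun _ hx _ hy => he.mul_mem_hClass hx hy, e, he.mem_hClass,
    fun _ hx => ⟨he.mul_eq_of_rle hx.2.1, he.mul_eq_of_lle hx.1.1⟩,
    fun _ hx => he.exists_inv_mem_hClass hx⟩

end IsIdempotentElem

namespace invAlong

variable {a d b : S}

lemma lrel_mul (h : invAlong a d b) : lrel (a * d) d :=
  ⟨Or.inr ⟨a, rfl⟩, Or.inr ⟨b, by rw [← mul_assoc, h.1]⟩⟩

lemma mul_mul_self (h : invAlong a d b) : b * a * b = b := by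
  obtain ⟨s, hs⟩ := h.2.2.1
  calc b * a * b = b * a * d * s := by rw [mul_assoc (b * a), ← hs]
    _ = b := by rw [h.1, hs]

lemma isIdempotentElem_mul (h : invAlong a d b) : IsIdempotentElem (a * b) := by
  rw [IsIdempotentElem, mul_assoc, ← mul_assoc b, h.mul_mul_self]

lemma hrel_mul (h : invAlong a d b) : hrel (a * b) (a * d) := by
  obtain ⟨bad, dab, ⟨s, hs⟩, ⟨t, ht⟩⟩ := h
  refine ⟨⟨Or.inr ⟨a * t * b, ?_⟩, Or.inr ⟨a * d, ?_⟩⟩, ⟨Or.inr ⟨s, ?_⟩, Or.inr ⟨a * d, ?_⟩⟩⟩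
  · rw [mul_assoc (a * t), ← mul_assoc b, bad, mul_assoc, ← ht]
  · rw [mul_assoc, ← mul_assoc d, dab]
  · rw [hs, mul_assoc]
  · rw [mul_assoc, ← mul_assoc b, bad]

end invAlong

theorem stmt8 (a d : S) (h : ∃ b, invAlong a d b) :
    lrel (a * d) d ∧ isGroupSet (hClass (a * d)) := by
  obtain ⟨b, hb⟩ := h
  refine ⟨hb.lrel_mul, ?_⟩
  rw [← hClass_eq_of_hrel hb.hrel_mul]
  exact hb.isIdempotentElem_mul.isGroupSet_hClass
end

section
/- Let R be a ring with involution * and a ∈ R. If aR = a*R, then a has a Moore-Penrose inverse if and only if a has a group inverse, and in that case a⁺ = a^♯. -/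
/-!
Write `aR = a*R` as `a* ∣ a` and `a ∣ a*`. If `b = a⁺`, then `a ∣ a*` turns `aba = a` into
`aba* = a*`, whose adjoint is `a²b = a`; dually `a* ∣ a` gives `ba² = a`, and together these force
`ab = ba`, so `a⁺` is a group inverse. Conversely, for a group inverse `c` the idempotent
`p = ac` satisfies `p* a* = a*`, and `a* ∣ a` makes `p` a right multiple of `a*`, so `p* p = p`
and `p` is self-adjoint. Group inverses are unique.
-/

section

variable {R : Type*}

def IsMoorePenroseInverse [Mul R] [Star R] (a b : R) : Prop :=
  a * b * a = a ∧ b * a * b = b ∧ star (a * b) = a * b ∧ star (b * a) = b * a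

def IsGroupInverse [Mul R] (a b : R) : Prop :=
  a * b * a = a ∧ b * a * b = b ∧ a * b = b * a

theorem star_dvd_and_dvd_star_of_range_eq [Monoid R] [Star R] {a : R}
    (h : {x : R | a ∣ x} = {x : R | star a ∣ x}) : star a ∣ a ∧ a ∣ star a :=
  ⟨(Set.ext_iff.mp h a).mp (dvd_refl a), (Set.ext_iff.mp h (star a)).mpr (dvd_refl (star a))⟩

section Semigroup

variable [Semigroup R] {a b c : R}

theorem IsGroupInverse.mul_eq_mul (hb : IsGroupInverse a b) (hc : IsGroupInverse a c) :
    a * b = a * c := by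
  obtain ⟨hb₁, -, hb₃⟩ := hb
  obtain ⟨hc₁, -, hc₃⟩ := hc
  calc a * b = a * c * (a * b) := by rw [← mul_assoc, hc₁]
    _ = c * (a * (b * a)) := by rw [hc₃, ← hb₃]; simp only [mul_assoc]
    _ = a * c := by rw [← mul_assoc a, hb₁, hc₃]

theorem IsGroupInverse.unique (hb : IsGroupInverse a b) (hc : IsGroupInverse a c) : b = c := by
  have hab := hb.mul_eq_mul hc
  obtain ⟨-, hb₂, hb₃⟩ := hb
  obtain ⟨-, hc₂, hc₃⟩ := hc
  calc b = b * a * b := hb₂.symm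
    _ = a * c * c := by rw [mul_assoc, hab, ← mul_assoc, ← hb₃, hab]
    _ = c := by rw [hc₃, hc₂]

variable [StarMul R]

theorem IsMoorePenroseInverse.isGroupInverse (hb : IsMoorePenroseInverse a b)
    (h₁ : star a ∣ a) (h₂ : a ∣ star a) : IsGroupInverse a b := by
  obtain ⟨hb₁, hb₂, hb₃, hb₄⟩ := hb
  obtain ⟨s, hs⟩ := h₁
  obtain ⟨t, ht⟩ := h₂
  have hab_star : a * b * star a = star a := by rw [ht, ← mul_assoc, hb₁]
  have hba_star : b * a * star a = star a := by
    simpa only [star_mul, star_star, hb₄, mul_assoc] using congrArg star hb₁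
  have haab : a * (a * b) = a := by
    simpa only [star_mul, star_star, hb₃] using congrArg star hab_star
  have hbaa : b * a * a = a :=
    calc b * a * a = b * a * star a * s := by rw [mul_assoc _ (star a), ← hs]
      _ = a := by rw [hba_star, ← hs]
  refine ⟨hb₁, hb₂, ?_⟩
  calc a * b = b * a * (a * b) := by rw [← mul_assoc, hbaa]
    _ = b * a := by rw [mul_assoc, haab]

theorem IsGroupInverse.isMoorePenroseInverse (hc : IsGroupInverse a c) (h : star a ∣ a) :
    IsMoorePenroseInverse a c := by
  obtain ⟨hc₁, hc₂, hc₃⟩ := hc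
  obtain ⟨s, hs⟩ := h
  have hp : a * c = star a * (s * c) := by rw [← mul_assoc, ← hs]
  have hp_star : star (a * c) * star a = star a := by
    rw [← star_mul, hc₃, ← mul_assoc, hc₁]
  have hpp : star (a * c) * (a * c) = a * c :=
    calc star (a * c) * (a * c) = star (a * c) * star a * (s * c) := by rw [mul_assoc, ← hp]
      _ = a * c := by rw [hp_star, hp]
  have hp_sa : star (a * c) = a * c := hpp ▸ IsSelfAdjoint.star_mul_self (a * c)
  exact ⟨hc₁, hc₂, hp_sa, hc₃ ▸ hp_sa⟩

end Semigroup

end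

theorem stmt18 {R : Type*} [Ring R] [StarRing R] (a : R)
    (h : {x : R | ∃ r, x = a * r} = {x : R | ∃ r, x = star a * r}) :
    ((∃ b, a * b * a = a ∧ b * a * b = b ∧ star (a * b) = a * b ∧ star (b * a) = b * a) ↔
      (∃ b, a * b * a = a ∧ b * a * b = b ∧ a * b = b * a)) ∧
    (∀ b c, (a * b * a = a ∧ b * a * b = b ∧ star (a * b) = a * b ∧ star (b * a) = b * a) →
      (a * c * a = a ∧ c * a * c = c ∧ a * c = c * a) → b = c) := by
  obtain ⟨h₁, h₂⟩ := star_dvd_and_dvd_star_of_range_eq h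
  refine ⟨⟨fun ⟨b, hb⟩ => ⟨b, ?_⟩, fun ⟨c, hc⟩ => ⟨c, ?_⟩⟩, fun b c hb hc => ?_⟩
  · exact IsMoorePenroseInverse.isGroupInverse hb h₁ h₂
  · exact IsGroupInverse.isMoorePenroseInverse hc h₁
  · exact (IsMoorePenroseInverse.isGroupInverse hb h₁ h₂).unique hc
end
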